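/- arXiv:2002.12608 — 10 statements merged into one kernel-verified Lean document; each statement's English description precedes it below -/
import Mathlib

section
/- If I is a weakly 1-absorbing primary ideal of a commutative ring R and √I is a maximal ideal of R, then I is a primary ideal of R. -/
open Ideal

def IsWeakly1AbsorbingPrimary {R : Type*} [CommRing R] (I : Ideal R) : Prop :=
  I ≠ ⊤ ∧ ∀ a b c : R, ¬IsUnit a → ¬IsUnit b → ¬IsUnit c →
    a * b * c ∈ I → a * b * c ≠ 0 → a * b ∈ I ∨ c ∈ I.radical

def IsWeaklyPrimary {R : Type*} [CommRing R] (I : Ideal R) : Prop :=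
  I ≠ ⊤ ∧ ∀ a b : R, a * b ∈ I → a * b ≠ 0 → a ∈ I ∨ b ∈ I.radical

def IsWeaklyPrime {R : Type*} [CommRing R] (I : Ideal R) : Prop :=
  I ≠ ⊤ ∧ ∀ a b : R, a * b ∈ I → a * b ≠ 0 → a ∈ I ∨ b ∈ I

theorem stmt3_general {R : Type*} [CommRing R] (I : Ideal R)
    (hm : I.radical.IsMaximal) :
    I.IsPrimary :=
  isPrimary_of_isMaximal_radical hm

theorem stmt3 {R : Type*} [CommRing R] [Nontrivial R] (I : Ideal R)
    (h : IsWeakly1AbsorbingPrimary I) (hm : I.radical.IsMaximal) :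
    I.IsPrimary :=
  stmt3_general I hm
end

section
/- If R is a reduced commutative ring and I is a nonzero weakly 1-absorbing primary ideal of R, then √I is a prime ideal of R. -/
/-!
Let `xy ∈ √I`. If `xy ≠ 0`, then `(xy)^n ∈ I` for some `n ≥ 1`, and applying the defining property
to the factorisation `x^n · x^n · y^n` of the nonzero element `x^n (xy)^n ∈ I` gives `x ∈ √I` or
`y ∈ √I`. If `xy = 0`, pick `0 ≠ i ∈ I`: one of `(x + i) y`, `x (y + i)`, `(x + i)(y + i)` is
nonzero, since otherwise `i² = 0`, and it lies in `I`, so the first case applies to that pair,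
which agrees with `(x, y)` modulo `I`.
-/

open Ideal

section

variable {R : Type*} [CommRing R] [IsReduced R] {I : Ideal R}

theorem IsWeakly1AbsorbingPrimary.mem_radical_or_of_mul_ne_zero
    (h : IsWeakly1AbsorbingPrimary I) {x y : R} (hxy : x * y ∈ I.radical) (hxy0 : x * y ≠ 0) :
    x ∈ I.radical ∨ y ∈ I.radical := by
  by_cases hx : IsUnit x
  · exact Or.inr ((I.radical.unit_mul_mem_iff_mem hx).mp hxy)
  by_cases hy : IsUnit y
  · exact Or.inl ((I.radical.unit_mul_mem_iff_mem hy).mp (mul_comm x y ▸ hxy))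
  obtain ⟨n, hn⟩ := hxy
  have hn1 : (x * y) ^ (n + 1) ∈ I := I.pow_mem_of_pow_mem hn n.le_succ
  have hpow : ∀ z : R, ¬IsUnit z → ¬IsUnit (z ^ (n + 1)) := fun z hz => by
    rwa [isUnit_pow_iff n.succ_ne_zero]
  have hmem : x ^ (n + 1) * x ^ (n + 1) * y ^ (n + 1) ∈ I := by
    rw [show x ^ (n + 1) * x ^ (n + 1) * y ^ (n + 1) = x ^ (n + 1) * (x * y) ^ (n + 1) by ring]
    exact I.mul_mem_left _ hn1
  have hne : x ^ (n + 1) * x ^ (n + 1) * y ^ (n + 1) ≠ 0 := fun h0 => hxy0 <| by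
    refine (pow_eq_zero_iff (n := 2 * (n + 1)) (by omega)).mp ?_
    rw [show (x * y) ^ (2 * (n + 1)) = x ^ (n + 1) * x ^ (n + 1) * y ^ (n + 1) * y ^ (n + 1) by
      ring, h0, zero_mul]
  rcases h.2 _ _ _ (hpow x hx) (hpow x hx) (hpow y hy) hmem hne with hxx | hyy
  · exact Or.inl ⟨2 * (n + 1), by rwa [two_mul, pow_add]⟩
  · exact Or.inr (mem_radical_of_pow_mem hyy)

theorem IsWeakly1AbsorbingPrimary.mem_radical_or_of_add_mul_add_ne_zero
    (h : IsWeakly1AbsorbingPrimary I) {x y i j : R} (hxy : x * y = 0) (hi : i ∈ I) (hj : j ∈ I)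
    (hne : (x + i) * (y + j) ≠ 0) : x ∈ I.radical ∨ y ∈ I.radical := by
  have hmem : (x + i) * (y + j) ∈ I := by
    rw [show (x + i) * (y + j) = x * j + i * (y + j) by linear_combination hxy]
    exact add_mem (I.mul_mem_left _ hj) (I.mul_mem_right _ hi)
  exact (h.mem_radical_or_of_mul_ne_zero (I.le_radical hmem) hne).imp
    (I.radical.add_mem_iff_left (I.le_radical hi)).mp
    (I.radical.add_mem_iff_left (I.le_radical hj)).mp

theorem IsWeakly1AbsorbingPrimary.mem_radical_or_of_mul_eq_zero
    (h : IsWeakly1AbsorbingPrimary I) (hI : I ≠ ⊥) {x y : R} (hxy : x * y = 0) :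
    x ∈ I.radical ∨ y ∈ I.radical := by
  obtain ⟨i, hi, hi0⟩ := (Submodule.ne_bot_iff I).mp hI
  have hsome : (x + i) * (y + 0) ≠ 0 ∨ (x + 0) * (y + i) ≠ 0 ∨ (x + i) * (y + i) ≠ 0 := by
    by_contra! hall
    obtain ⟨h1, h2, h3⟩ := hall
    exact hi0 <| (pow_eq_zero_iff two_ne_zero).mp (by linear_combination h3 - h1 - h2 + hxy)
  rcases hsome with hne | hne | hne
  · exact h.mem_radical_or_of_add_mul_add_ne_zero hxy hi I.zero_mem hne
  · exact h.mem_radical_or_of_add_mul_add_ne_zero hxy I.zero_mem hi hne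
  · exact h.mem_radical_or_of_add_mul_add_ne_zero hxy hi hi hne

end

theorem stmt4_general {R : Type*} [CommRing R] [IsReduced R] (I : Ideal R)
    (hne : I ≠ ⊥) (h : IsWeakly1AbsorbingPrimary I) : I.radical.IsPrime := by
  refine ⟨fun htop => h.1 (radical_eq_top.mp htop), fun {x y} hxy => ?_⟩
  by_cases hxy0 : x * y = 0
  · exact h.mem_radical_or_of_mul_eq_zero hne hxy0
  · exact h.mem_radical_or_of_mul_ne_zero hxy hxy0

theorem stmt4 {R : Type*} [CommRing R] [Nontrivial R] [IsReduced R] (I : Ideal R)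
    (hne : I ≠ ⊥) (h : IsWeakly1AbsorbingPrimary I) : I.radical.IsPrime :=
  stmt4_general I hne h
end

section
/- Let R be a von Neumann regular commutative ring and I a nonzero proper ideal of R. Then I is a weakly 1-absorbing primary ideal of R if and only if I is a primary ideal of R. -/
/-!
In a von Neumann regular ring every principal ideal is generated by an idempotent, so primality
need only be tested on idempotents `e`, `f` with `e * f ∈ I`. To make the product nonzero, join
both with a nonzero idempotent `g ∈ I`: `e' = e + g - e g` and `f' = f + g - f g` satisfy
`e' * e' * f' ∈ I` and `e' * e' * f' * g = g ≠ 0`, and since `e * e' = e` and `f * f' = f` the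
conclusion for `e'`, `f'` descends to `e`, `f`. A unit idempotent is `1`, and `e' = 1` forces
`f = f * e' ∈ I`.
-/

open Ideal

section

variable {R : Type*} [CommRing R]

theorem Ideal.mem_iff_mem_of_span_singleton_eq {r s : R} (h : span {r} = span {s})
    (J : Ideal R) : r ∈ J ↔ s ∈ J := by
  rw [← span_singleton_le_iff_mem, h, span_singleton_le_iff_mem]

theorem exists_isIdempotentElem_span_singleton_eq (hvn : ∀ x : R, ∃ y : R, x ^ 2 * y = x)
    (x : R) : ∃ e : R, IsIdempotentElem e ∧ span {e} = span {x} := by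
  obtain ⟨y, hy⟩ := hvn x
  refine ⟨x * y, isIdempotentElem_iff.2 (by linear_combination y * hy), le_antisymm ?_ ?_⟩
  · exact span_singleton_le_span_singleton.2 (dvd_mul_right x y)
  · exact span_singleton_le_span_singleton.2 ⟨x, by linear_combination -hy⟩

theorem Ideal.IsPrimary.isWeakly1AbsorbingPrimary {I : Ideal R} (hI : I.IsPrimary) :
    IsWeakly1AbsorbingPrimary I :=
  ⟨hI.ne_top, fun _ _ _ _ _ _ habc _ => (isPrimary_iff.1 hI).2 habc⟩

theorem IsWeakly1AbsorbingPrimary.mem_or_mem_radical_of_isIdempotentElem {I : Ideal R}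
    (hI : IsWeakly1AbsorbingPrimary I) {g : R} (hg : IsIdempotentElem g) (hgI : g ∈ I)
    (hg0 : g ≠ 0) {e f : R} (he : IsIdempotentElem e) (hf : IsIdempotentElem f)
    (hef : e * f ∈ I) : e ∈ I ∨ f ∈ I.radical := by
  have hee' : e * (e + g - e * g) = e := by linear_combination (1 - g) * he.eq
  have hff' : f * (f + g - f * g) = f := by linear_combination (1 - g) * hf.eq
  have he'g : (e + g - e * g) * g = g := by linear_combination (1 - e) * hg.eq
  have hf'g : (f + g - f * g) * g = g := by linear_combination (1 - f) * hg.eq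
  have hfe' : f * (e + g - e * g) ∈ I := by
    rw [show f * (e + g - e * g) = e * f + g * (f - e * f) by ring]
    exact I.add_mem hef (I.mul_mem_right _ hgI)
  have hef' : e * (f + g - f * g) ∈ I := by
    rw [show e * (f + g - f * g) = e * f + g * (e - e * f) by ring]
    exact I.add_mem hef (I.mul_mem_right _ hgI)
  have he'f' : (e + g - e * g) * (f + g - f * g) ∈ I := by
    rw [show (e + g - e * g) * (f + g - f * g) =
      e * (f + g - f * g) + g * ((1 - e) * (f + g - f * g)) by ring]
    exact I.add_mem hef' (I.mul_mem_right _ hgI)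
  set e' := e + g - e * g
  set f' := f + g - f * g
  have he' : IsIdempotentElem e' := he.add_sub_mul hg
  have hf' : IsIdempotentElem f' := hf.add_sub_mul hg
  by_cases hue : IsUnit e'
  · rw [(IsIdempotentElem.iff_eq_one_of_isUnit hue).1 he', mul_one] at hfe'
    exact .inr (le_radical hfe')
  by_cases huf : IsUnit f'
  · rw [(IsIdempotentElem.iff_eq_one_of_isUnit huf).1 hf', mul_one] at hef'
    exact .inl hef'
  have hg_eq : e' * e' * f' * g = g := by rw [mul_assoc, hf'g, mul_assoc, he'g, he'g]
  have hne : e' * e' * f' ≠ 0 := fun h0 => hg0 (by rw [← hg_eq, h0, zero_mul])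
  rcases hI.2 e' e' f' hue hue huf (he'.eq.symm ▸ he'f') hne with h | h
  · exact .inl (hee' ▸ I.mul_mem_left e (he'.eq ▸ h))
  · exact .inr (hff' ▸ I.radical.mul_mem_left f h)

theorem IsWeakly1AbsorbingPrimary.isPrimary (hvn : ∀ x : R, ∃ y : R, x ^ 2 * y = x)
    {I : Ideal R} (hI : IsWeakly1AbsorbingPrimary I) (hne : I ≠ ⊥) : I.IsPrimary := by
  obtain ⟨x, hxI, hx0⟩ := Submodule.exists_mem_ne_zero_of_ne_bot hne
  obtain ⟨g, hg, hgx⟩ := exists_isIdempotentElem_span_singleton_eq hvn x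
  have hg0 : g ≠ 0 := by
    rintro rfl
    exact hx0 (span_singleton_eq_bot.1 (hgx.symm.trans span_singleton_zero))
  have hgI : g ∈ I := (mem_iff_mem_of_span_singleton_eq hgx I).2 hxI
  refine isPrimary_iff.2 ⟨hI.1, fun {a b} hab => ?_⟩
  obtain ⟨e, he, hea⟩ := exists_isIdempotentElem_span_singleton_eq hvn a
  obtain ⟨f, hf, hfb⟩ := exists_isIdempotentElem_span_singleton_eq hvn b
  have hef : span {e * f} = span {a * b} := by
    rw [← span_singleton_mul_span_singleton, hea, hfb, span_singleton_mul_span_singleton]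
  rw [← mem_iff_mem_of_span_singleton_eq hea, ← mem_iff_mem_of_span_singleton_eq hfb]
  exact hI.mem_or_mem_radical_of_isIdempotentElem hg hgI hg0 he hf
    ((mem_iff_mem_of_span_singleton_eq hef I).2 hab)

end

theorem stmt5_general {R : Type*} [CommRing R]
    (hvn : ∀ x : R, ∃ y : R, x ^ 2 * y = x) (I : Ideal R)
    (hne : I ≠ ⊥) :
    IsWeakly1AbsorbingPrimary I ↔ I.IsPrimary :=
  ⟨fun h => h.isPrimary hvn hne, IsPrimary.isWeakly1AbsorbingPrimary⟩

theorem stmt5 {R : Type*} [CommRing R] [Nontrivial R]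
    (hvn : ∀ x : R, ∃ y : R, x ^ 2 * y = x) (I : Ideal R)
    (hne : I ≠ ⊥) (hI : I ≠ ⊤) :
    IsWeakly1AbsorbingPrimary I ↔ I.IsPrimary :=
  stmt5_general hvn I hne
end

section
/- If I is a weakly 1-absorbing primary ideal of the polynomial ring R[X] over a commutative ring R, then I is a weakly primary ideal of R[X]. -/
open Ideal

open Polynomial

/- Multiply a product `0 ≠ ab ∈ I` (with `a`, `b` nonunits) by a nonunit non-zero-divisor `c`;
the weakly 1-absorbing primary condition gives `ca ∈ I` or `b ∈ √I`. Doing this for `c = X` and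
`c = X + 1` and subtracting yields `a ∈ I` unless `b ∈ √I`. -/

section

variable {R : Type*} [CommRing R] {I : Ideal R}

theorem IsWeakly1AbsorbingPrimary.mul_mem_or_mem_radical (hI : IsWeakly1AbsorbingPrimary I)
    {a b c : R} (hc : ¬IsUnit c) (hc_reg : IsLeftRegular c) (ha : ¬IsUnit a) (hb : ¬IsUnit b)
    (hab : a * b ∈ I) (hab0 : a * b ≠ 0) : c * a ∈ I ∨ b ∈ I.radical := by
  refine hI.2 c a b hc ha hb ?_ ?_ <;> rw [mul_assoc]
  · exact I.mul_mem_left c hab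
  · exact fun h => hab0 (hc_reg (h.trans (mul_zero c).symm))

theorem IsWeakly1AbsorbingPrimary.isWeaklyPrimary_of_isLeftRegular
    (hI : IsWeakly1AbsorbingPrimary I) {u : R} (hu : ¬IsUnit u) (hu₁ : ¬IsUnit (u + 1))
    (hu_reg : IsLeftRegular u) (hu₁_reg : IsLeftRegular (u + 1)) : IsWeaklyPrimary I := by
  refine ⟨hI.1, fun a b hab hab0 => ?_⟩
  by_cases ha : IsUnit a
  · exact .inr (I.le_radical ((I.unit_mul_mem_iff_mem ha).mp hab))
  by_cases hb : IsUnit b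
  · exact .inl ((I.mul_unit_mem_iff_mem hb).mp hab)
  rcases hI.mul_mem_or_mem_radical hu₁ hu₁_reg ha hb hab hab0 with h₁ | hb_rad
  · rcases hI.mul_mem_or_mem_radical hu hu_reg ha hb hab hab0 with h₀ | hb_rad
    · have : (u + 1) * a - u * a = a := by ring
      exact .inl (this ▸ I.sub_mem h₁ h₀)
    · exact .inr hb_rad
  · exact .inr hb_rad

end

theorem stmt8 {R : Type*} [CommRing R] [Nontrivial R] (I : Ideal (Polynomial R))
    (h : IsWeakly1AbsorbingPrimary I) : IsWeaklyPrimary I := by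
  have hX₁ : (X + 1 : R[X]).Monic := by simpa using monic_X_add_C (1 : R)
  refine h.isWeaklyPrimary_of_isLeftRegular not_isUnit_X ?_ monic_X.isRegular.left
    hX₁.isRegular.left
  simpa using not_isUnit_X_add_C (1 : R)
end

section
/- Let I be a weakly 1-absorbing primary ideal of a commutative ring R and (a, b, c) a 1-triple-zero of I with a ∉ (I : c) and b ∉ (I : c). Then I³ = 0. -/
/-! Perturbing a 1-triple-zero `(a, b, c)` of `I` by elements `x, y, z ∈ I` changes none of the
products `ab`, `ac`, `bc`, `abc` modulo `I`, nor whether `c` lies in `√I`. So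
`(a + x)(b + y)(c + z)` is a product in `I` that the weakly 1-absorbing primary property cannot
decompose, and it must vanish. Expanding the eight such products with some of `x, y, z`
replaced by `0` isolates `xyz = 0`, i.e. `I³ = 0`. -/

open Ideal

theorem Ideal.pow_three_eq_bot_of_forall_mul_mul_eq_zero {R : Type*} [CommRing R] (I : Ideal R)
    (H : ∀ x ∈ I, ∀ y ∈ I, ∀ z ∈ I, x * y * z = 0) : I ^ 3 = ⊥ := by
  rw [pow_succ, pow_two, eq_bot_iff, Ideal.mul_le]
  intro p hp z hz
  have hI2 : I * I ≤ (⊥ : Ideal R).colon {z} :=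
    Ideal.mul_le.2 fun x hx y hy => Submodule.mem_colon_singleton.2 (H x hx y hy z hz)
  exact Submodule.mem_colon_singleton.1 (hI2 hp)

namespace IsWeakly1AbsorbingPrimary

variable {R : Type*} [CommRing R] {I : Ideal R}

theorem mul_mul_eq_zero (h : IsWeakly1AbsorbingPrimary I) {a b c : R} (habc : a * b * c ∈ I)
    (hab : a * b ∉ I) (hac : a * c ∉ I) (hbc : b * c ∉ I) (hc : c ∉ I.radical) :
    a * b * c = 0 := by
  by_contra hne
  by_cases ha : IsUnit a
  · exact hbc ((I.unit_mul_mem_iff_mem ha).1 (by rwa [← mul_assoc]))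
  by_cases hb : IsUnit b
  · exact hac ((I.unit_mul_mem_iff_mem hb).1 (by rwa [mul_left_comm, ← mul_assoc]))
  by_cases hc' : IsUnit c
  · exact hab ((I.mul_unit_mem_iff_mem hc').1 habc)
  exact (h.2 a b c ha hb hc' habc hne).elim hab hc

theorem add_mul_add_mul_add_eq_zero (h : IsWeakly1AbsorbingPrimary I) {a b c : R}
    (habc : a * b * c ∈ I) (hab : a * b ∉ I) (hac : a * c ∉ I) (hbc : b * c ∉ I)
    (hc : c ∉ I.radical) {x y z : R} (hx : x ∈ I) (hy : y ∈ I) (hz : z ∈ I) :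
    (a + x) * (b + y) * (c + z) = 0 := by
  simp only [← Ideal.Quotient.eq_zero_iff_mem, map_mul] at habc hab hac hbc
  have hmk : ∀ w ∈ I, Ideal.Quotient.mk I w = 0 := fun _ => Ideal.Quotient.eq_zero_iff_mem.2
  refine h.mul_mul_eq_zero ?_ ?_ ?_ ?_
    fun hcz => hc ((I.radical.add_mem_iff_left (I.le_radical hz)).1 hcz) <;>
    simpa only [← Ideal.Quotient.eq_zero_iff_mem, map_mul, map_add, hmk x hx, hmk y hy, hmk z hz,
      add_zero]

end IsWeakly1AbsorbingPrimary

theorem stmt11_general {R : Type*} [CommRing R] (I : Ideal R)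
    (h : IsWeakly1AbsorbingPrimary I) (a b c : R)
    (habc : a * b * c = 0) (hab : a * b ∉ I) (hcr : c ∉ I.radical)
    (hac : a * c ∉ I) (hbc : b * c ∉ I) :
    I ^ 3 = ⊥ := by
  have hmem : a * b * c ∈ I := habc ▸ I.zero_mem
  have f : ∀ x ∈ I, ∀ y ∈ I, ∀ z ∈ I, (a + x) * (b + y) * (c + z) = 0 :=
    fun x hx y hy z hz => h.add_mul_add_mul_add_eq_zero hmem hab hac hbc hcr hx hy hz
  have h0 := I.zero_mem
  refine I.pow_three_eq_bot_of_forall_mul_mul_eq_zero fun x hx y hy z hz => ?_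
  linear_combination f x hx y hy z hz - f 0 h0 y hy z hz - f x hx 0 h0 z hz - f x hx y hy 0 h0
    + f x hx 0 h0 0 h0 + f 0 h0 y hy 0 h0 + f 0 h0 0 h0 z hz - f 0 h0 0 h0 0 h0

theorem stmt11 {R : Type*} [CommRing R] [Nontrivial R] (I : Ideal R)
    (h : IsWeakly1AbsorbingPrimary I) (a b c : R)
    (ha : ¬IsUnit a) (hb : ¬IsUnit b) (hc : ¬IsUnit c)
    (habc : a * b * c = 0) (hab : a * b ∉ I) (hcr : c ∉ I.radical)
    (hac : a * c ∉ I) (hbc : b * c ∉ I) :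
    I ^ 3 = ⊥ :=
  stmt11_general I h a b c habc hab hcr hac hbc
end

section
/- Let R be a reduced commutative ring and I a weakly 1-absorbing primary ideal of R that admits a 1-triple-zero (a, b, c) with a ∉ (I : c) and b ∉ (I : c). Then I = 0. -/
/-!
Perturbing the factors of the 1-triple-zero by elements of `I` changes neither the class of a
product modulo `I` nor membership of `c` in `√I`. If a perturbed factor becomes a unit, the
product of the other two lies in `I`, which `ab, ac, bc ∉ I` forbid; otherwise weak 1-absorbing
primality forces the perturbed product to vanish. So `(a + i)(b + j)(c + k) = 0` for all
`i, j, k ∈ I`, and the alternating sum of these products over `i, j, k ∈ {0, x}` is `x ^ 3`.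
-/

open Ideal

section

variable {R : Type*} [CommRing R] {I : Ideal R} {a b c i j k : R}

theorem Ideal.add_mul_add_mem_iff (hi : i ∈ I) (hj : j ∈ I) :
    (a + i) * (b + j) ∈ I ↔ a * b ∈ I := by
  simp only [← Quotient.eq_zero_iff_mem, map_mul, map_add, Quotient.eq_zero_iff_mem.2 hi,
    Quotient.eq_zero_iff_mem.2 hj, add_zero]

theorem Ideal.add_mul_add_mul_add_mem_iff (hi : i ∈ I) (hj : j ∈ I) (hk : k ∈ I) :
    (a + i) * (b + j) * (c + k) ∈ I ↔ a * b * c ∈ I := by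
  simp only [← Quotient.eq_zero_iff_mem, map_mul, map_add, Quotient.eq_zero_iff_mem.2 hi,
    Quotient.eq_zero_iff_mem.2 hj, Quotient.eq_zero_iff_mem.2 hk, add_zero]

theorem IsWeakly1AbsorbingPrimary.add_mul_add_mul_add_eq_zero_s12 (h : IsWeakly1AbsorbingPrimary I)
    (habc : a * b * c ∈ I) (hab : a * b ∉ I) (hcr : c ∉ I.radical) (hac : a * c ∉ I)
    (hbc : b * c ∉ I) (hi : i ∈ I) (hj : j ∈ I) (hk : k ∈ I) :
    (a + i) * (b + j) * (c + k) = 0 := by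
  by_contra hne
  have hmem : (a + i) * (b + j) * (c + k) ∈ I :=
    (add_mul_add_mul_add_mem_iff hi hj hk).2 habc
  by_cases hua : IsUnit (a + i)
  · rw [mul_assoc, unit_mul_mem_iff_mem _ hua, add_mul_add_mem_iff hj hk] at hmem
    exact hbc hmem
  by_cases hub : IsUnit (b + j)
  · rw [mul_right_comm, mul_unit_mem_iff_mem _ hub, add_mul_add_mem_iff hi hk] at hmem
    exact hac hmem
  by_cases huc : IsUnit (c + k)
  · rw [mul_unit_mem_iff_mem _ huc, add_mul_add_mem_iff hi hj] at hmem
    exact hab hmem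
  rcases h.2 _ _ _ hua hub huc hmem hne with hmem' | hrad
  · exact hab ((add_mul_add_mem_iff hi hj).1 hmem')
  · exact hcr ((I.radical.add_mem_iff_left (I.le_radical hk)).1 hrad)

end

theorem stmt12_general {R : Type*} [CommRing R] [IsReduced R] (I : Ideal R)
    (h : IsWeakly1AbsorbingPrimary I) (a b c : R)
    (habc : a * b * c = 0) (hab : a * b ∉ I) (hcr : c ∉ I.radical)
    (hac : a * c ∉ I) (hbc : b * c ∉ I) :
    I = ⊥ := by
  have hzero : ∀ {i j k}, i ∈ I → j ∈ I → k ∈ I → (a + i) * (b + j) * (c + k) = 0 :=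
    h.add_mul_add_mul_add_eq_zero_s12 (habc ▸ I.zero_mem) hab hcr hac hbc
  refine eq_bot_iff.2 fun x hx => mem_bot.2 ?_
  have h0 := I.zero_mem
  have hcube : x ^ 3 = 0 := by
    linear_combination hzero hx hx hx - hzero hx hx h0 - hzero hx h0 hx - hzero h0 hx hx
      + hzero hx h0 h0 + hzero h0 hx h0 + hzero h0 h0 hx - hzero h0 h0 h0
  exact IsNilpotent.eq_zero ⟨3, hcube⟩

theorem stmt12 {R : Type*} [CommRing R] [Nontrivial R] [IsReduced R] (I : Ideal R)
    (h : IsWeakly1AbsorbingPrimary I) (a b c : R)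
    (ha : ¬IsUnit a) (hb : ¬IsUnit b) (hc : ¬IsUnit c)
    (habc : a * b * c = 0) (hab : a * b ∉ I) (hcr : c ∉ I.radical)
    (hac : a * c ∉ I) (hbc : b * c ∉ I) :
    I = ⊥ :=
  stmt12_general I h a b c habc hab hcr hac hbc
end

section
/- Let R₁ and R₂ be commutative rings with 1 ≠ 0 that are not fields, R = R₁ × R₂, and I a nonzero proper ideal of R. If I is a weakly 1-absorbing primary ideal of R, then I = I₁ × R₂ for some primary ideal I₁ of R₁, or I = R₁ × I₂ for some primary ideal I₂ of R₂. -/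
/-!
Every ideal of `R₁ × R₂` is a product `I₁ × I₂`. If `(a, b) ≠ 0` lies in it, say `a ≠ 0` with `a`
not a unit, then `(1, 0) (1, 0) (a, 1) = (a, 0)` forces `(1, 0) ∈ I` or a power `(aⁿ, 1) ∈ I`, so one
factor is the whole ring. For `I = R₁ × J`, a product `x y ∈ J` of nonunits gives
`(1, x) (u, 1) (1, y) = (u, x y) ∈ I`, which is nonzero for a nonzero nonunit `u ∈ R₁` (it exists as
`R₁` is not a field); hence `x ∈ J` or `y ∈ √J`, i.e. `J` is primary.
-/

open Ideal

namespace IsWeakly1AbsorbingPrimary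

variable {R S : Type*} [CommRing R] [CommRing S]

theorem comap_ringEquiv {I : Ideal S} (h : IsWeakly1AbsorbingPrimary I) (e : R ≃+* S) :
    IsWeakly1AbsorbingPrimary (I.comap e) := by
  refine ⟨comap_ne_top _ h.1, fun a b c ha hb hc habc h0 => ?_⟩
  simpa only [mem_comap, ← comap_radical, map_mul] using
    h.2 (e a) (e b) (e c) ((isUnit_map_iff e a).not.2 ha) ((isUnit_map_iff e b).not.2 hb)
      ((isUnit_map_iff e c).not.2 hc) (by simpa only [mem_comap, map_mul] using habc)
      (by simpa only [map_mul] using (map_ne_zero_iff e e.injective).2 h0)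

theorem prod_comm {I : Ideal R} {J : Ideal S} (h : IsWeakly1AbsorbingPrimary (prod I J)) :
    IsWeakly1AbsorbingPrimary (prod J I) := by
  rw [← map_prodComm_prod, map_comap_of_equiv]
  exact h.comap_ringEquiv _

theorem eq_top_or_eq_top_of_mem_ne_zero [Nontrivial S] {I : Ideal R} {J : Ideal S}
    (h : IsWeakly1AbsorbingPrimary (prod I J)) {a : R} (ha : a ∈ I) (ha0 : a ≠ 0) :
    I = ⊤ ∨ J = ⊤ := by
  by_cases hau : IsUnit a
  · exact .inl (eq_top_of_isUnit_mem I ha hau)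
  have hnu : ¬IsUnit ((1, 0) : R × S) := by simp [Prod.isUnit_iff]
  rcases h.2 (1, 0) (1, 0) (a, 1) hnu hnu (by simp [Prod.isUnit_iff, hau]) (by simp [ha])
      (by simp [ha0]) with h10 | ⟨n, hn⟩
  · exact .inl ((eq_top_iff_one I).2 (by simpa using h10))
  · exact .inr ((eq_top_iff_one J).2 (by simpa using ((mem_prod _ _).1 hn).2))

theorem eq_top_or_eq_top_of_ne_bot [Nontrivial R] [Nontrivial S] {I : Ideal R} {J : Ideal S}
    (h : IsWeakly1AbsorbingPrimary (prod I J)) (hne : prod I J ≠ ⊥) : I = ⊤ ∨ J = ⊤ := by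
  rw [Ne, prod_eq_bot_iff, not_and_or] at hne
  rcases hne with hI | hJ
  · obtain ⟨a, ha, ha0⟩ := Submodule.exists_mem_ne_zero_of_ne_bot hI
    exact h.eq_top_or_eq_top_of_mem_ne_zero ha ha0
  · obtain ⟨b, hb, hb0⟩ := Submodule.exists_mem_ne_zero_of_ne_bot hJ
    exact (h.prod_comm.eq_top_or_eq_top_of_mem_ne_zero hb hb0).symm

theorem isPrimary_of_top_prod [Nontrivial R] (hR : ¬IsField R) {J : Ideal S}
    (h : IsWeakly1AbsorbingPrimary (prod (⊤ : Ideal R) J)) : J.IsPrimary := by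
  obtain ⟨u, hu0, hu⟩ := Ring.exists_not_isUnit_of_not_isField hR
  refine isPrimary_iff.2 ⟨fun hJ => h.1 (by simp [hJ]), fun {x y} hxy => ?_⟩
  by_cases hx : IsUnit x
  · exact .inr (le_radical ((unit_mul_mem_iff_mem J hx).1 hxy))
  by_cases hy : IsUnit y
  · exact .inl ((mul_unit_mem_iff_mem J hy).1 hxy)
  rcases h.2 (1, x) (u, 1) (1, y) (by simp [Prod.isUnit_iff, hx]) (by simp [Prod.isUnit_iff, hu])
      (by simp [Prod.isUnit_iff, hy]) (by simp [hxy]) (by simp [hu0]) with hxu | ⟨n, hn⟩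
  · exact .inl (by simpa using ((mem_prod _ _).1 hxu).2)
  · exact .inr ⟨n, by simpa using ((mem_prod _ _).1 hn).2⟩

end IsWeakly1AbsorbingPrimary

theorem stmt16_general {R₁ R₂ : Type*} [CommRing R₁] [CommRing R₂] [Nontrivial R₁] [Nontrivial R₂]
    (hf1 : ¬IsField R₁) (hf2 : ¬IsField R₂)
    (I : Ideal (R₁ × R₂)) (hne : I ≠ ⊥)
    (h : IsWeakly1AbsorbingPrimary I) :
    (∃ I₁ : Ideal R₁, I₁.IsPrimary ∧ I = Ideal.prod I₁ ⊤) ∨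
    (∃ I₂ : Ideal R₂, I₂.IsPrimary ∧ I = Ideal.prod ⊤ I₂) := by
  obtain ⟨I₁, I₂, rfl⟩ : ∃ I₁ I₂, I = prod I₁ I₂ := ⟨_, _, ideal_prod_eq I⟩
  rcases h.eq_top_or_eq_top_of_ne_bot hne with rfl | rfl
  · exact .inr ⟨I₂, h.isPrimary_of_top_prod hf1, rfl⟩
  · exact .inl ⟨I₁, h.prod_comm.isPrimary_of_top_prod hf2, rfl⟩

theorem stmt16 {R₁ R₂ : Type*} [CommRing R₁] [CommRing R₂] [Nontrivial R₁] [Nontrivial R₂]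
    (hf1 : ¬IsField R₁) (hf2 : ¬IsField R₂)
    (I : Ideal (R₁ × R₂)) (hne : I ≠ ⊥) (hI : I ≠ ⊤)
    (h : IsWeakly1AbsorbingPrimary I) :
    (∃ I₁ : Ideal R₁, I₁.IsPrimary ∧ I = Ideal.prod I₁ ⊤) ∨
    (∃ I₂ : Ideal R₂, I₂.IsPrimary ∧ I = Ideal.prod ⊤ I₂) :=
  stmt16_general hf1 hf2 I hne h
end

section
/- Let R₁, R₂, R₃ be commutative rings with 1 ≠ 0 and R = R₁ × R₂ × R₃. Then not every proper ideal of R is a weakly 1-absorbing primary ideal of R; specifically, R₁ × {0} × {0} is not weakly 1-absorbing primary whenever R₁ is nontrivial. -/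
open Ideal

theorem IsIdempotentElem.not_isUnit {M : Type*} [Monoid M] {e : M} (he : IsIdempotentElem e)
    (h1 : e ≠ 1) : ¬IsUnit e :=
  fun hu ↦ h1 ((IsIdempotentElem.iff_eq_one_of_isUnit hu).mp he)

namespace Ideal

variable {R S : Type*} [CommRing R] [CommRing S]

theorem mem_radical_prod_top_bot_iff {x : R × S} :
    x ∈ (prod (⊤ : Ideal R) ⊥).radical ↔ IsNilpotent x.2 := by
  simp [mem_radical_iff, mem_prod, IsNilpotent]

/-- The witness is `a = b = (1, 1 - e)`, `c = (1, e)`: then `abc = (1, 0)`, but `ab = (1, 1 - e)`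
and the idempotent `e` is not nilpotent. -/
theorem not_isWeakly1AbsorbingPrimary_prod_top_bot [Nontrivial R] {e : S}
    (he : IsIdempotentElem e) (he0 : e ≠ 0) (he1 : e ≠ 1) :
    ¬IsWeakly1AbsorbingPrimary (prod (⊤ : Ideal R) (⊥ : Ideal S)) := by
  rintro ⟨-, h⟩
  have hce : (1 - e) * (1 - e) * e = 0 := by rw [mul_assoc, he.one_sub_mul_self, mul_zero]
  have ha : ¬IsUnit ((1, 1 - e) : R × S) := by
    rw [Prod.isUnit_iff]
    exact fun hu ↦ he.one_sub.not_isUnit (by simpa using he0) hu.2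
  have hc : ¬IsUnit ((1, e) : R × S) := by
    rw [Prod.isUnit_iff]
    exact fun hu ↦ he.not_isUnit he1 hu.2
  rcases h _ _ _ ha ha hc (by simp [mem_prod, hce]) (by simp [Prod.ext_iff])
    with hab | hrad
  · have h1e : (1 : S) - e = 0 := by simpa [mem_prod, he.one_sub.eq] using hab
    exact he1 (sub_eq_zero.mp h1e).symm
  · exact he0 (he.eq_zero_of_isNilpotent (mem_radical_prod_top_bot_iff.mp hrad))

end Ideal

theorem stmt17 {R₁ R₂ R₃ : Type*} [CommRing R₁] [CommRing R₂] [CommRing R₃]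
    [Nontrivial R₁] [Nontrivial R₂] [Nontrivial R₃] :
    ¬ IsWeakly1AbsorbingPrimary
      (Ideal.prod (⊤ : Ideal R₁) (⊥ : Ideal (R₂ × R₃))) :=
  Ideal.not_isWeakly1AbsorbingPrimary_prod_top_bot (e := ((1, 0) : R₂ × R₃))
    (by simp [IsIdempotentElem]) (by simp [Prod.ext_iff]) (by simp [Prod.ext_iff])
end

section
/- Let f : R₁ → R₂ be a surjective ring homomorphism of commutative rings and I a weakly 1-absorbing primary ideal of R₁ with ker(f) ⊆ I. Then f(I) is a weakly 1-absorbing primary ideal of R₂. -/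
open Ideal

theorem Ideal.mem_map_iff_of_surjective_of_ker_le {R S : Type*} [Ring R] [Ring S]
    {f : R →+* S} (hf : Function.Surjective f) {I : Ideal R} (hk : RingHom.ker f ≤ I) {x : R} :
    f x ∈ I.map f ↔ x ∈ I := by
  rw [← mem_comap, comap_map_of_surjective' f hf, sup_eq_left.mpr hk]

theorem Ideal.map_ne_top_of_surjective_of_ker_le {R S : Type*} [Ring R] [Ring S]
    {f : R →+* S} (hf : Function.Surjective f) {I : Ideal R} (hk : RingHom.ker f ≤ I)
    (hI : I ≠ ⊤) : I.map f ≠ ⊤ := by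
  rw [ne_eq, eq_top_iff_one, ← map_one f, mem_map_iff_of_surjective_of_ker_le hf hk]
  exact (ne_top_iff_one I).mp hI

theorem IsWeakly1AbsorbingPrimary.map_of_surjective_of_ker_le {R S : Type*} [CommRing R]
    [CommRing S] {f : R →+* S} (hf : Function.Surjective f) {I : Ideal R}
    (hI : IsWeakly1AbsorbingPrimary I) (hk : RingHom.ker f ≤ I) :
    IsWeakly1AbsorbingPrimary (I.map f) := by
  refine ⟨map_ne_top_of_surjective_of_ker_le hf hk hI.1, ?_⟩
  intro a b c ha hb hc habc hne
  obtain ⟨a, rfl⟩ := hf a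
  obtain ⟨b, rfl⟩ := hf b
  obtain ⟨c, rfl⟩ := hf c
  simp only [← map_mul] at habc hne ⊢
  rw [mem_map_iff_of_surjective_of_ker_le hf hk] at habc
  rw [mem_map_iff_of_surjective_of_ker_le hf hk, ← map_radical_of_surjective hf hk]
  refine (hI.2 a b c (mt (IsUnit.map f) ha) (mt (IsUnit.map f) hb) (mt (IsUnit.map f) hc) habc
    fun h0 ↦ hne (by rw [h0, map_zero])).imp id (mem_map_of_mem f)

theorem stmt18_general {R₁ R₂ : Type*} [CommRing R₁] [CommRing R₂]
    (f : R₁ →+* R₂) (hf : Function.Surjective f)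
    (I : Ideal R₁) (h : IsWeakly1AbsorbingPrimary I)
    (hker : RingHom.ker f ≤ I) :
    IsWeakly1AbsorbingPrimary (I.map f) :=
  h.map_of_surjective_of_ker_le hf hker

theorem stmt18 {R₁ R₂ : Type*} [CommRing R₁] [CommRing R₂] [Nontrivial R₁] [Nontrivial R₂]
    (f : R₁ →+* R₂) (hf : Function.Surjective f)
    (I : Ideal R₁) (h : IsWeakly1AbsorbingPrimary I)
    (hker : RingHom.ker f ≤ I) :
    IsWeakly1AbsorbingPrimary (I.map f) :=
  stmt18_general f hf I h hker
end

section
/- Let S be a multiplicatively closed subset of a commutative ring R and I a weakly 1-absorbing primary ideal of R with I ∩ S = ∅. Then the localization S⁻¹I is a weakly 1-absorbing primary ideal of S⁻¹R. -/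
open Ideal

/-! Write the three fractions as a/s, b/t, c/u. If (abc)/(stu) lies in S⁻¹I and is nonzero, then
some v ∈ M has v·abc ∈ I and v·abc ≠ 0; the condition on I applied to (va, b, c) gives va·b ∈ I,
hence (ab)/(st) ∈ S⁻¹I, or c ∈ √I, hence c/u ∈ S⁻¹√I = √(S⁻¹I). -/

section Localization

variable {R : Type*} [CommRing R] {M : Submonoid R} {S : Type*} [CommRing S] [Algebra R S]
  [IsLocalization M S]

theorem IsLocalization.not_isUnit_of_not_isUnit_mk' {x : R} {s : M}
    (hx : ¬IsUnit (IsLocalization.mk' S x s)) : ¬IsUnit x := fun hu ↦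
  hx <| isUnit_of_mul_isUnit_left <|
    (IsLocalization.mk'_spec S x s).symm ▸ hu.map (algebraMap R S)

theorem IsLocalization.mk'_mem_map_algebraMap_of_mem {I : Ideal R} {x : R} (hx : x ∈ I) (s : M) :
    IsLocalization.mk' S x s ∈ I.map (algebraMap R S) :=
  IsLocalization.mk'_mem_iff.mpr (mem_map_of_mem _ hx)

theorem IsLocalization.exists_mul_mem_ne_zero_of_mk'_mem_map {I : Ideal R} {x : R} {s : M}
    (hmem : IsLocalization.mk' S x s ∈ I.map (algebraMap R S))
    (hne : IsLocalization.mk' S x s ≠ 0) : ∃ v ∈ M, v * x ∈ I ∧ v * x ≠ 0 := by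
  obtain ⟨v, hv, hvx⟩ := (IsLocalization.mk'_mem_map_algebraMap_iff M S I x s).mp hmem
  refine ⟨v, hv, hvx, fun h0 ↦ hne ?_⟩
  exact (IsLocalization.mk'_eq_zero_iff x s).mpr ⟨⟨v, hv⟩, h0⟩

theorem IsWeakly1AbsorbingPrimary.map_algebraMap {I : Ideal R} (hI : IsWeakly1AbsorbingPrimary I)
    (hdisj : Disjoint (M : Set R) I) :
    IsWeakly1AbsorbingPrimary (I.map (algebraMap R S)) := by
  refine ⟨(IsLocalization.map_algebraMap_ne_top_iff_disjoint M S I).mpr hdisj, ?_⟩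
  intro x y z hx hy hz hmem hne
  obtain ⟨⟨a, s⟩, rfl⟩ := IsLocalization.mk'_surjective M x
  obtain ⟨⟨b, t⟩, rfl⟩ := IsLocalization.mk'_surjective M y
  obtain ⟨⟨c, u⟩, rfl⟩ := IsLocalization.mk'_surjective M z
  simp only [← IsLocalization.mk'_mul] at hmem hne ⊢
  obtain ⟨v, hv, hvI, hv0⟩ := IsLocalization.exists_mul_mem_ne_zero_of_mk'_mem_map hmem hne
  have hva : ¬IsUnit (v * a) := fun hu ↦
    IsLocalization.not_isUnit_of_not_isUnit_mk' hx (isUnit_of_mul_isUnit_right hu)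
  simp only [← mul_assoc] at hvI hv0
  rcases hI.2 (v * a) b c hva (IsLocalization.not_isUnit_of_not_isUnit_mk' hy)
      (IsLocalization.not_isUnit_of_not_isUnit_mk' hz) hvI hv0 with hab | hc
  · exact .inl <| (IsLocalization.mk'_mem_map_algebraMap_iff M S I _ _).mpr
      ⟨v, hv, by rwa [← mul_assoc]⟩
  · exact .inr <| IsLocalization.map_radical M S I ▸
      IsLocalization.mk'_mem_map_algebraMap_of_mem hc u

end Localization

theorem stmt19_general {R : Type*} [CommRing R] (S : Submonoid R)
    (I : Ideal R) (h : IsWeakly1AbsorbingPrimary I)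
    (hdisj : ∀ s ∈ S, s ∉ I) :
    IsWeakly1AbsorbingPrimary (I.map (algebraMap R (Localization S))) :=
  h.map_algebraMap (Set.disjoint_left.mpr hdisj)

theorem stmt19 {R : Type*} [CommRing R] [Nontrivial R] (S : Submonoid R)
    (I : Ideal R) (h : IsWeakly1AbsorbingPrimary I)
    (hdisj : ∀ s ∈ S, s ∉ I) :
    IsWeakly1AbsorbingPrimary (I.map (algebraMap R (Localization S))) :=
  stmt19_general S I h hdisj
end
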